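/- arXiv:1811.03609 — 3 statements merged into one kernel-verified Lean document; each statement's English description precedes it below -/
import Mathlib

section
/- Let k be a natural number, κ : Fin k → ℝ with κ i > 0 for every i, and let W > 0 and δ > 0 be real numbers. Then there exists κ′ : Fin k → ℚ such that, writing w(v) = ∑_i κ i · v i and w_p(v) = ∑_i (κ′ i : ℝ) · v i for v : Fin k → ℕ, the following hold: (a) for every v with w(v) ≤ W one has |w_p(v) − w(v)| < δ; (b) for all v₁ ≠ v₂ with w(v₁) ≤ W and w(v₂) ≤ W one has w_p(v₁) ≠ w_p(v₂); (c) for every v with w(v) ≥ W + 1 one has w_p(v) ≥ W + 1 − δ. -/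
/-!
Entries of a vector of weight `≤ W` are bounded by some `B`, so these vectors form a finite set `S`
on which the base-`B` expansion `v ↦ ∑ i, B ^ i * v i` is injective. For weights
`κ' = r + t • (B ^ i)ᵢ`, a coincidence `w_p v₁ = w_p v₂` with `v₁ ≠ v₂` in `S` is a linear equation
in `t` with nonzero slope, so only finitely many `t` are bad and some small rational `t` is good.
Choosing `r` rational with `κ < κ' < (1 + ε) κ` gives `0 ≤ w_p - w ≤ ε w`, hence closeness on `S`
and `w ≤ w_p` everywhere.
-/

open Finset Filter Topology

theorem Set.Finite.setOf_not_injOn_add_mul {ι K : Type*} [Field K] {S : Set ι} (hS : S.Finite)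
    (f g : ι → K) (hg : S.InjOn g) :
    {t : K | ¬ S.InjOn (fun x => f x + t * g x)}.Finite := by
  refine ((hS.prod hS).image fun p => (f p.2 - f p.1) / (g p.1 - g p.2)).subset ?_
  intro t ht
  simp only [Set.InjOn, not_forall] at ht
  obtain ⟨x, hx, y, hy, hxy, hne⟩ := ht
  have hgne : g x - g y ≠ 0 := sub_ne_zero.2 fun h => hne (hg hx hy h)
  exact ⟨(x, y), ⟨hx, hy⟩, by
    dsimp only; rw [div_eq_iff hgne]; linear_combination -hxy⟩

theorem injOn_sum_pow_mul {R : Type*} [CommSemiring R] [CharZero R] (k B : ℕ) :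
    {v : Fin k → ℕ | ∀ i, v i < B}.InjOn fun v => ∑ i : Fin k, (B : R) ^ (i : ℕ) * v i := by
  intro v hv w hw h
  have hdigits : finFunctionFinEquiv (fun i => (⟨v i, hv i⟩ : Fin B))
      = finFunctionFinEquiv (fun i => (⟨w i, hw i⟩ : Fin B)) := by
    ext
    simp only [finFunctionFinEquiv_apply]
    have h' : ((∑ i : Fin k, v i * B ^ (i : ℕ) : ℕ) : R)
        = ((∑ i : Fin k, w i * B ^ (i : ℕ) : ℕ) : R) := by
      push_cast; simpa only [mul_comm] using h
    exact_mod_cast h'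
  funext i
  exact congrArg Fin.val (congrFun (finFunctionFinEquiv.injective hdigits) i)

theorem exists_rat_btwn_injOn_sum_mul {ι : Type*} [Fintype ι] {S : Set (ι → ℕ)} (hS : S.Finite)
    (c : ι → ℚ) (hc : S.InjOn fun v => ∑ i, c i * v i) {lo hi : ι → ℝ} (h : ∀ i, lo i < hi i) :
    ∃ q : ι → ℚ, (∀ i, lo i < q i ∧ (q i : ℝ) < hi i) ∧ S.InjOn fun v => ∑ i, q i * v i := by
  choose r hr using fun i => exists_rat_btwn (h i)
  have hnear : ∀ᶠ t : ℚ in 𝓝 0,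
      ∀ i, lo i < ((r i + t * c i : ℚ) : ℝ) ∧ ((r i + t * c i : ℚ) : ℝ) < hi i := by
    refine eventually_all.2 fun i => ?_
    have hcont : ContinuousAt (fun t : ℚ => ((r i + t * c i : ℚ) : ℝ)) 0 :=
      (Rat.continuous_coe_real.comp (by fun_prop)).continuousAt
    refine (continuousAt_const.eventually_lt hcont ?_).and (hcont.eventually_lt continuousAt_const ?_)
    · simpa using (hr i).1
    · simpa using (hr i).2
  have hbad := hS.setOf_not_injOn_add_mul (fun v => ∑ i, r i * v i) (fun v => ∑ i, c i * v i) hc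
  -- `𝓝[≠] 0` is a proper filter on `ℚ` finer than `cofinite`, so it avoids the finite bad set.
  obtain ⟨t, ht, htgood⟩ := ((hnear.filter_mono nhdsWithin_le_nhds).and
    (hbad.eventually_cofinite_notMem.filter_mono (nhdsNE_le_cofinite 0))).exists
  refine ⟨fun i => r i + t * c i, ht, ?_⟩
  simpa [add_mul, sum_add_distrib, mul_sum, mul_assoc] using htgood

theorem lt_of_sum_mul_le {ι : Type*} [Fintype ι] {κ : ι → ℝ} (hκ : ∀ i, 0 < κ i) {W : ℝ} {B : ℕ}
    (hB : ∀ i, W / κ i < B) {v : ι → ℕ} (hv : ∑ i, κ i * v i ≤ W) (i : ι) : v i < B := by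
  have hterm : κ i * v i ≤ W :=
    (single_le_sum (fun j _ => mul_nonneg (hκ j).le (Nat.cast_nonneg _)) (mem_univ i)).trans hv
  exact_mod_cast ((le_div_iff₀' (hκ i)).2 hterm).trans_lt (hB i)

theorem separating_actions_general (k : ℕ) (κ : Fin k → ℝ) (hκ : ∀ i, 0 < κ i)
    (W δ : ℝ) (hδ : 0 < δ) :
    ∃ κ' : Fin k → ℚ,
      (∀ v : Fin k → ℕ, (∑ i, κ i * (v i : ℝ)) ≤ W →
        |(∑ i, (κ' i : ℝ) * (v i : ℝ)) - ∑ i, κ i * (v i : ℝ)| < δ) ∧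
      (∀ v₁ v₂ : Fin k → ℕ, v₁ ≠ v₂ →
        (∑ i, κ i * (v₁ i : ℝ)) ≤ W → (∑ i, κ i * (v₂ i : ℝ)) ≤ W →
        (∑ i, (κ' i : ℝ) * (v₁ i : ℝ)) ≠ ∑ i, (κ' i : ℝ) * (v₂ i : ℝ)) ∧
      (∀ v : Fin k → ℕ, W + 1 ≤ ∑ i, κ i * (v i : ℝ) →
        W + 1 - δ ≤ ∑ i, (κ' i : ℝ) * (v i : ℝ)) := by
  set ε := δ / (|W| + 1)
  have hε : 0 < ε := by positivity
  have hεW : ε * W < δ := by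
    have : ε * (|W| + 1) = δ := div_mul_cancel₀ δ (by positivity)
    nlinarith [le_abs_self W]
  obtain ⟨B, hB⟩ : ∃ B : ℕ, ∀ i, W / κ i < B := (eventually_all.2 fun i =>
    (tendsto_natCast_atTop_atTop (R := ℝ)).eventually_gt_atTop (W / κ i)).exists
  have hbox : {v : Fin k → ℕ | ∑ i, κ i * v i ≤ W} ⊆ {v | ∀ i, v i < B} :=
    fun v hv => lt_of_sum_mul_le hκ hB hv
  have hfin : {v : Fin k → ℕ | ∑ i, κ i * v i ≤ W}.Finite :=
    (Set.Finite.pi fun _ => Set.finite_Iio B).subset fun v hv i _ => hbox hv i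
  obtain ⟨κ', hκ', hinj⟩ := exists_rat_btwn_injOn_sum_mul hfin _
    ((injOn_sum_pow_mul k B).mono hbox) (hi := fun i => (1 + ε) * κ i)
    (fun i => by nlinarith [hκ i])
  have hlower (v : Fin k → ℕ) : ∑ i, κ i * (v i : ℝ) ≤ ∑ i, (κ' i : ℝ) * v i := by
    gcongr with i
    exact (hκ' i).1.le
  have hupper (v : Fin k → ℕ) : ∑ i, (κ' i : ℝ) * v i ≤ (1 + ε) * ∑ i, κ i * (v i : ℝ) := by
    simp_rw [mul_sum, ← mul_assoc]
    gcongr with i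
    exact (hκ' i).2.le
  refine ⟨κ', fun v hv => ?_, fun v₁ v₂ hne h₁ h₂ heq => hne (hinj h₁ h₂ ?_),
    fun v hv => by linarith [hlower v]⟩
  · rw [abs_of_nonneg (sub_nonneg.2 (hlower v))]
    nlinarith [hupper v, mul_le_mul_of_nonneg_left hv hε.le]
  · exact_mod_cast heq

/-- Section 3.4 ("Separating actions"): the divisorial weights `κ i > 0` can be
perturbed to rational numbers `κ' i` whose weighted winding numbers
`w_p v = ∑ i, κ' i * v i` are δ-close to `w v = ∑ i, κ i * v i` on the set of
multiplicity vectors of weight at most `W`, are pairwise distinct there, and do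
not fall below `W + 1 − δ` on vectors of weight at least `W + 1`. -/
theorem separating_actions (k : ℕ) (κ : Fin k → ℝ) (hκ : ∀ i, 0 < κ i)
    (W δ : ℝ) (hW : 0 < W) (hδ : 0 < δ) :
    ∃ κ' : Fin k → ℚ,
      (∀ v : Fin k → ℕ, (∑ i, κ i * (v i : ℝ)) ≤ W →
        |(∑ i, (κ' i : ℝ) * (v i : ℝ)) - ∑ i, κ i * (v i : ℝ)| < δ) ∧
      (∀ v₁ v₂ : Fin k → ℕ, v₁ ≠ v₂ →
        (∑ i, κ i * (v₁ i : ℝ)) ≤ W → (∑ i, κ i * (v₂ i : ℝ)) ≤ W →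
        (∑ i, (κ' i : ℝ) * (v₁ i : ℝ)) ≠ ∑ i, (κ' i : ℝ) * (v₂ i : ℝ)) ∧
      (∀ v : Fin k → ℕ, W + 1 ≤ ∑ i, κ i * (v i : ℝ) →
        W + 1 - δ ≤ ∑ i, (κ' i : ℝ) * (v i : ℝ)) :=
  separating_actions_general k κ hκ W δ hδ
end

section
/- Let g : ℝ × ℝ → ℂ be twice continuously differentiable (ContDiff ℝ 2 on the product). Assume that g(q, 0) = 0 and g(q, −q) = 0 for every q ∈ ℝ. Then the function q ↦ (deriv (fun y => g (q, y)) 0) / q tends, as q → 0 within {q : q ≠ 0}, to (1/2) · iteratedDeriv 2 (fun y => g (0, y)) 0, i.e. to one half of the second derivative of y ↦ g(0, y) at y = 0. -/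
/-!
Write `B` for the second derivative of `g` at the origin. Since `g` vanishes on the lines
`ℝ • (1, 0)` and `ℝ • (1, -1)`, so do the derivatives of `g` along them, and differentiating once
more gives `B (1, 0) (1, 0) = 0` and `B (1, -1) (1, -1) = 0`. Together with the symmetry of `B`
this forces `2 B (1, 0) (0, 1) = B (0, 1) (0, 1)`. Finally `q ↦ ∂₂g (q, 0)` vanishes at `0`, so
`∂₂g (q, 0) / q` tends to its derivative `B (1, 0) (0, 1)` at `0`.
-/

open Filter Topology

section

variable {E F : Type*} [NormedAddCommGroup E] [NormedSpace ℝ E]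
  [NormedAddCommGroup F] [NormedSpace ℝ F] {f : E → F} {v : E}

theorem fderiv_apply_eq_zero_of_forall_smul_eq_zero (h : ∀ s : ℝ, f (s • v) = 0) {s : ℝ}
    (hf : DifferentiableAt ℝ f (s • v)) : fderiv ℝ f (s • v) v = 0 := by
  have hderiv : HasDerivAt (fun t : ℝ => f (t • v)) (fderiv ℝ f (s • v) v) s := by
    simpa [Function.comp_def] using
      hf.hasFDerivAt.comp_hasDerivAt s ((hasDerivAt_id s).smul_const v)
  rw [show (fun t : ℝ => f (t • v)) = fun _ => 0 from funext h] at hderiv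
  exact hderiv.unique (hasDerivAt_const s 0)

theorem hasFDerivAt_fderiv_apply {x : E} (hf : DifferentiableAt ℝ (fderiv ℝ f) x) (w : E) :
    HasFDerivAt (fun y => fderiv ℝ f y w) ((fderiv ℝ (fderiv ℝ f) x).flip w) x := by
  simpa using hf.hasFDerivAt.clm_apply (hasFDerivAt_const w x)

theorem fderiv_fderiv_apply_self_eq_zero_of_forall_smul_eq_zero (h : ∀ s : ℝ, f (s • v) = 0)
    (hf : Differentiable ℝ f) (hf' : DifferentiableAt ℝ (fderiv ℝ f) 0) :
    fderiv ℝ (fderiv ℝ f) 0 v v = 0 := by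
  have hline : ∀ s : ℝ, fderiv ℝ f (s • v) v = 0 := fun s =>
    fderiv_apply_eq_zero_of_forall_smul_eq_zero h (hf _)
  have hderiv := hasFDerivAt_fderiv_apply hf' v
  simpa [hderiv.fderiv] using fderiv_apply_eq_zero_of_forall_smul_eq_zero
    (f := fun x => fderiv ℝ f x v) hline (s := 0) (by simpa using hderiv.differentiableAt)

theorem ContinuousLinearMap.two_smul_apply_eq_of_isotropic {B : E →L[ℝ] E →L[ℝ] F} {u w : E}
    (hsymm : B u w = B w u) (hu : B u u = 0) (huw : B (u - w) (u - w) = 0) :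
    (2 : ℝ) • B u w = B w w := by
  simp only [map_sub, sub_apply, hu] at huw
  rw [two_smul]
  linear_combination (norm := module) -huw + hsymm

theorem HasFDerivAt.hasDerivAt_comp_prodMk_left {f : ℝ × E → F} {f' : ℝ × E →L[ℝ] F} {x : ℝ}
    {y : E} (hf : HasFDerivAt f f' (x, y)) : HasDerivAt (fun t => f (t, y)) (f' (1, 0)) x :=
  hf.comp_hasDerivAt x ((hasDerivAt_id x).prodMk (hasDerivAt_const x y))

theorem HasFDerivAt.hasDerivAt_comp_prodMk_right {f : E × ℝ → F} {f' : E × ℝ →L[ℝ] F} {x : E}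
    {y : ℝ} (hf : HasFDerivAt f f' (x, y)) : HasDerivAt (fun t => f (x, t)) (f' (0, 1)) y :=
  hf.comp_hasDerivAt y ((hasDerivAt_const y x).prodMk (hasDerivAt_id y))

theorem iteratedDeriv_two_comp_prodMk_right {f : E × ℝ → F} {x : E} {y : ℝ}
    (hf : Differentiable ℝ f) (hf' : DifferentiableAt ℝ (fderiv ℝ f) (x, y)) :
    iteratedDeriv 2 (fun t => f (x, t)) y = fderiv ℝ (fderiv ℝ f) (x, y) (0, 1) (0, 1) := by
  have hderiv : deriv (fun t => f (x, t)) = fun t => fderiv ℝ f (x, t) (0, 1) :=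
    funext fun t => (hf _).hasFDerivAt.hasDerivAt_comp_prodMk_right.deriv
  rw [iteratedDeriv_succ, iteratedDeriv_one, hderiv]
  exact (hasFDerivAt_fderiv_apply hf' (0, 1)).hasDerivAt_comp_prodMk_right.deriv

end

theorem HasDerivAt.tendsto_div_nhdsNE {𝕜 : Type*} [RCLike 𝕜] {φ : ℝ → 𝕜} {c : 𝕜}
    (hφ : HasDerivAt φ c 0) (h0 : φ 0 = 0) : Tendsto (fun q : ℝ => φ q / q) (𝓝[≠] 0) (𝓝 c) := by
  refine hφ.tendsto_slope_zero.congr fun t => ?_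
  simp [h0, RCLike.real_smul_eq_coe_mul, div_eq_inv_mul]

/-- Analytic core of case (i) of Lemma 3.7 (lem:evalKN): if `g : ℝ × ℝ → ℂ` is C²
with `g (q, 0) = 0` and `g (q, −q) = 0` for all `q`, then the first derivative
in `y` at `0`, divided by `q`, tends to half the second derivative of
`y ↦ g (0, y)` at `0` as `q → 0`, `q ≠ 0`. -/
theorem colliding_zeros_limit (g : ℝ × ℝ → ℂ) (hg : ContDiff ℝ 2 g)
    (h0 : ∀ q : ℝ, g (q, 0) = 0) (h1 : ∀ q : ℝ, g (q, -q) = 0) :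
    Tendsto (fun q : ℝ => (deriv (fun y : ℝ => g (q, y)) 0) / (q : ℂ))
      (nhdsWithin 0 {q : ℝ | q ≠ 0})
      (nhds ((1 / 2) * iteratedDeriv 2 (fun y : ℝ => g (0, y)) 0)) := by
  have hg₁ : Differentiable ℝ g := hg.differentiable two_ne_zero
  have hg₂ : Differentiable ℝ (fderiv ℝ g) := (hg.fderiv_right le_rfl).differentiable one_ne_zero
  have hu : ∀ s : ℝ, g (s • ((1, 0) : ℝ × ℝ)) = 0 := by simpa using h0
  have huw : ∀ s : ℝ, g (s • ((1, 0) - (0, 1) : ℝ × ℝ)) = 0 := by simpa using h1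
  have hslice_zero : fderiv ℝ g 0 (0, 1) = 0 := by
    have hu' := fderiv_apply_eq_zero_of_forall_smul_eq_zero hu (hg₁ _) (s := 0)
    have huw' := fderiv_apply_eq_zero_of_forall_smul_eq_zero huw (hg₁ _) (s := 0)
    rw [zero_smul] at hu' huw'
    rw [← sub_sub_cancel ((1, 0) : ℝ × ℝ) (0, 1), map_sub, hu', huw', sub_zero]
  have hpolar : (2 : ℝ) • fderiv ℝ (fderiv ℝ g) 0 (1, 0) (0, 1) =
      fderiv ℝ (fderiv ℝ g) 0 (0, 1) (0, 1) :=
    ContinuousLinearMap.two_smul_apply_eq_of_isotropic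
      ((hg.contDiffAt.isSymmSndFDerivAt (by simp)) _ _)
      (fderiv_fderiv_apply_self_eq_zero_of_forall_smul_eq_zero hu hg₁ (hg₂ 0))
      (fderiv_fderiv_apply_self_eq_zero_of_forall_smul_eq_zero huw hg₁ (hg₂ 0))
  have hslope := ((hasFDerivAt_fderiv_apply (hg₂ 0) (0, 1)).hasDerivAt_comp_prodMk_left
    (x := 0) (y := 0)).tendsto_div_nhdsNE hslice_zero
  have hlimit : (1 / 2 : ℂ) * iteratedDeriv 2 (fun y : ℝ => g (0, y)) 0 =
      fderiv ℝ (fderiv ℝ g) 0 (1, 0) (0, 1) := by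
    rw [iteratedDeriv_two_comp_prodMk_right hg₁ (hg₂ _), Prod.mk_zero_zero, ← hpolar,
      Complex.real_smul]
    push_cast
    ring
  rw [hlimit]
  refine hslope.congr fun q => ?_
  rw [(hg₁ _).hasFDerivAt.hasDerivAt_comp_prodMk_right.deriv]
  rfl
end

section
/- Let m ≥ 1 be a natural number and let g : ℝ × ℝ → ℂ be of class C^{m+2} (ContDiff ℝ (m + 2) on the product). Assume that for every q ∈ ℝ: g(q, 0) = 0, and iteratedDeriv j (fun y => g (q, y)) (−q) = 0 for every natural number j with j ≤ m − 1 (so y ↦ g(q, y) vanishes to order at least m at y = −q). Then the function q ↦ (iteratedDeriv m (fun y => g (q, y)) (−q)) / q tends, as q → 0 within {q : q ≠ 0}, to −(1/(m+1)) · iteratedDeriv (m + 1) (fun y => g (0, y)) 0. -/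
/-! Expand `y ↦ g (q, y)` by Taylor's formula at `y = -q` to order `m + 1` and evaluate it at
`y = 0`, a distance `|q|` away, where it vanishes. The terms of order `< m` vanish, so
`q^m/m! · a q + q^(m+1)/(m+1)! · b q = O(q^(m+2))` with `a q = ∂_y^m g (q, -q)` and
`b q = ∂_y^(m+1) g (q, -q)`; the constant is uniform in `q` because `∂_y^(m+2) g` is jointly
continuous. Dividing by `q^(m+1)/m!` gives `a q / q + b q / (m+1) = O(q)`, and `b q → b 0`. -/

open Filter Set Topology Asymptotics
open scoped Nat

theorem ContDiff.iteratedDeriv_uncurry {𝕜 E F : Type*} [NontriviallyNormedField 𝕜]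
    [NormedAddCommGroup E] [NormedSpace 𝕜 E] [NormedAddCommGroup F] [NormedSpace 𝕜 F]
    {f : E → 𝕜 → F} {n : WithTop ℕ∞} {k : ℕ} (hf : ContDiff 𝕜 (n + k) (Function.uncurry f)) :
    ContDiff 𝕜 n fun p : E × 𝕜 => iteratedDeriv k (f p.1) p.2 := by
  induction k generalizing n with
  | zero => simpa [Function.uncurry_def] using hf
  | succ k ih =>
    simp only [iteratedDeriv_succ]
    have hk : ContDiff 𝕜 (n + 1) fun p : E × 𝕜 => iteratedDeriv k (f p.1) p.2 :=
      ih (by rwa [add_assoc, add_comm 1, ← Nat.cast_one, ← Nat.cast_add])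
    exact ContDiff.fderiv_apply (f := fun (p : E × 𝕜) y => iteratedDeriv k (f p.1) y)
      (hk.comp (contDiff_fst.fst.prodMk contDiff_snd)) contDiff_snd contDiff_const le_rfl

theorem norm_sub_sum_iteratedDeriv_le {F : Type*} [NormedAddCommGroup F] [NormedSpace ℝ F]
    [CompleteSpace F] {f : ℝ → F} {n : ℕ} {x₀ x C : ℝ} (hf : ContDiff ℝ (n + 1) f)
    (hC : ∀ t ∈ uIcc x₀ x, ‖iteratedDeriv (n + 1) f t‖ ≤ C) :
    ‖f x - ∑ k ∈ Finset.range (n + 1), ((k ! : ℝ)⁻¹ * (x - x₀) ^ k) • iteratedDeriv k f x₀‖ ≤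
      C * |x - x₀| ^ (n + 1) / n ! := by
  rcases eq_or_ne x₀ x with rfl | hne
  · simp [Finset.sum_range_succ']
  have hs : UniqueDiffOn ℝ (uIcc x₀ x) := uniqueDiffOn_uIcc hne
  have hwithin : ∀ k ≤ n + 1, ∀ t ∈ uIcc x₀ x,
      iteratedDerivWithin k f (uIcc x₀ x) t = iteratedDeriv k f t := fun k hk t ht =>
    iteratedDerivWithin_eq_iteratedDeriv hs (hf.contDiffAt.of_le (by exact_mod_cast hk)) ht
  have hrem := taylor_integral_remainder (hf.contDiffOn (s := uIcc x₀ x))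
  rw [taylor_within_apply, Finset.sum_congr rfl fun k hk => by
    rw [hwithin k (by simp at hk; omega) x₀ left_mem_uIcc]] at hrem
  rw [hrem]
  calc _ ≤ (|x - x₀| ^ n / n ! * C) * |x - x₀| := by
        refine intervalIntegral.norm_integral_le_of_norm_le_const fun t ht => ?_
        have ht' : t ∈ uIcc x₀ x := uIoc_subset_uIcc ht
        rw [norm_smul, hwithin (n + 1) le_rfl t ht', Real.norm_eq_abs, abs_div, abs_pow,
          Nat.abs_cast]
        have hdist : |x - t| ^ n ≤ |x - x₀| ^ n :=
          pow_le_pow_left₀ (abs_nonneg _) (abs_sub_right_of_mem_uIcc ht') n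
        gcongr
        exact hC t ht'
    _ = C * |x - x₀| ^ (n + 1) / n ! := by ring

theorem norm_taylor_two_terms_le_of_vanishing {F : Type*} [NormedAddCommGroup F] [NormedSpace ℝ F]
    [CompleteSpace F] {f : ℝ → F} {n : ℕ} {x₀ x C : ℝ} (hf : ContDiff ℝ (n + 2) f)
    (hvanish : ∀ k < n, iteratedDeriv k f x₀ = 0) (hx : f x = 0)
    (hC : ∀ t ∈ uIcc x₀ x, ‖iteratedDeriv (n + 2) f t‖ ≤ C) :
    ‖((x - x₀) ^ n / n ! : ℝ) • iteratedDeriv n f x₀ +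
        ((x - x₀) ^ (n + 1) / (n + 1) ! : ℝ) • iteratedDeriv (n + 1) f x₀‖ ≤
      C * |x - x₀| ^ (n + 2) / (n + 1) ! := by
  have h := norm_sub_sum_iteratedDeriv_le (n := n + 1) (by exact_mod_cast hf) hC
  rwa [hx, zero_sub, norm_neg, Finset.sum_range_succ, Finset.sum_range_succ,
    Finset.sum_eq_zero fun k hk => by rw [hvanish k (Finset.mem_range.mp hk), smul_zero],
    zero_add, ← div_eq_inv_mul, ← div_eq_inv_mul] at h

theorem tendsto_div_of_taylor_two_terms_isBigO {a b : ℝ → ℂ} {b₀ : ℂ} (n : ℕ)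
    (hb : Tendsto b (𝓝[≠] 0) (𝓝 b₀))
    (h : (fun q : ℝ => (q ^ n / n ! : ℝ) • a q + (q ^ (n + 1) / (n + 1) ! : ℝ) • b q)
      =O[𝓝[≠] 0] fun q => q ^ (n + 2)) :
    Tendsto (fun q : ℝ => a q / q) (𝓝[≠] 0) (𝓝 (-(1 / ((n : ℂ) + 1)) * b₀)) := by
  set r : ℝ → ℂ := fun q => a q / q + 1 / ((n : ℂ) + 1) * b q
  have hr : r =O[𝓝[≠] 0] fun q => q := by
    have := (isBigO_refl (fun q : ℝ => (n ! : ℝ) / q ^ (n + 1)) (𝓝[≠] 0)).smul h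
    refine (this.congr' ?_ (g₂ := fun q => (n ! : ℝ) * q) ?_).trans (isBigO_const_mul_self _ _ _)
    · filter_upwards [self_mem_nhdsWithin] with q (hq : q ≠ 0)
      have hqC : (q : ℂ) ≠ 0 := by exact_mod_cast hq
      have hfact : (n ! : ℂ) ≠ 0 := by exact_mod_cast n.factorial_ne_zero
      simp only [r, Complex.real_smul, Nat.factorial_succ]
      push_cast
      field_simp
      ring
    · filter_upwards [self_mem_nhdsWithin] with q (hq : q ≠ 0)
      simp only [smul_eq_mul]
      field_simp
      ring
  have hr0 : Tendsto r (𝓝[≠] 0) (𝓝 0) :=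
    hr.trans_tendsto (tendsto_nhdsWithin_of_tendsto_nhds tendsto_id)
  simpa [r] using hr0.sub (hb.const_mul (1 / ((n : ℂ) + 1)))

theorem colliding_zeros_limit_higher_general (m : ℕ) (g : ℝ × ℝ → ℂ)
    (hg : ContDiff ℝ (m + 2) g)
    (h0 : ∀ q : ℝ, g (q, 0) = 0)
    (h1 : ∀ q : ℝ, ∀ j : ℕ, j ≤ m - 1 → iteratedDeriv j (fun y : ℝ => g (q, y)) (-q) = 0) :
    Tendsto (fun q : ℝ => (iteratedDeriv m (fun y : ℝ => g (q, y)) (-q)) / (q : ℂ))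
      (nhdsWithin 0 {q : ℝ | q ≠ 0})
      (nhds (-(1 / ((m : ℂ) + 1)) * iteratedDeriv (m + 1) (fun y : ℝ => g (0, y)) 0)) := by
  have hderiv : ∀ k ≤ m + 2,
      Continuous fun p : ℝ × ℝ => iteratedDeriv k (fun y => g (p.1, y)) p.2 := fun k hk =>
    (ContDiff.iteratedDeriv_uncurry (n := 0) (f := fun q y => g (q, y))
      (hg.of_le (by rw [zero_add]; exact_mod_cast hk))).continuous
  obtain ⟨C, hC⟩ := (isCompact_Icc.prod isCompact_Icc).exists_bound_of_continuousOn
    (hderiv (m + 2) le_rfl).continuousOn (s := Icc (-1 : ℝ) 1 ×ˢ Icc (-1 : ℝ) 1)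
  have hb : Continuous fun q : ℝ => iteratedDeriv (m + 1) (fun y => g (q, y)) (-q) :=
    (hderiv (m + 1) (by omega)).comp (continuous_id.prodMk continuous_neg)
  refine tendsto_div_of_taylor_two_terms_isBigO m
    (by simpa using (hb.tendsto 0).mono_left nhdsWithin_le_nhds)
    (IsBigO.of_bound (C / (m + 1) !) ?_)
  have hsmall : ∀ᶠ q in 𝓝[≠] (0 : ℝ), |q| ≤ 1 :=
    nhdsWithin_le_nhds (eventually_abs_sub_lt 0 one_pos |>.mono fun q hq => by simpa using hq.le)
  filter_upwards [hsmall] with q hq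
  have hbound : ∀ t ∈ uIcc (-q) 0, ‖iteratedDeriv (m + 2) (fun y => g (q, y)) t‖ ≤ C := by
    intro t ht
    obtain ⟨hq₁, hq₂⟩ := abs_le.mp hq
    exact hC (q, t) ⟨⟨hq₁, hq₂⟩,
      uIcc_subset_Icc ⟨by linarith, by linarith⟩ ⟨by norm_num, by norm_num⟩ ht⟩
  have htaylor := norm_taylor_two_terms_le_of_vanishing (f := fun y => g (q, y))
    (hg.comp (contDiff_const.prodMk contDiff_id)) (fun k hk => h1 q k (by omega)) (h0 q) hbound
  rw [zero_sub, neg_neg] at htaylor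
  rwa [Real.norm_eq_abs, abs_pow, div_mul_eq_mul_div]

/-- Analytic core of case (ii) of Lemma 3.7 (lem:evalKN): if `g : ℝ × ℝ → ℂ` is
C^{m+2}, vanishes at `y = 0`, and `y ↦ g (q, y)` vanishes to order at least `m`
at `y = −q` for every `q`, then `(∂_y^m g)(q, −q)/q` tends to
`−(1/(m+1))·(∂_y^{m+1} g)(0, 0)` as `q → 0`, `q ≠ 0`. -/
theorem colliding_zeros_limit_higher (m : ℕ) (hm : 1 ≤ m) (g : ℝ × ℝ → ℂ)
    (hg : ContDiff ℝ (m + 2) g)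
    (h0 : ∀ q : ℝ, g (q, 0) = 0)
    (h1 : ∀ q : ℝ, ∀ j : ℕ, j ≤ m - 1 → iteratedDeriv j (fun y : ℝ => g (q, y)) (-q) = 0) :
    Tendsto (fun q : ℝ => (iteratedDeriv m (fun y : ℝ => g (q, y)) (-q)) / (q : ℂ))
      (nhdsWithin 0 {q : ℝ | q ≠ 0})
      (nhds (-(1 / ((m : ℂ) + 1)) * iteratedDeriv (m + 1) (fun y : ℝ => g (0, y)) 0)) :=
  colliding_zeros_limit_higher_general m g hg h0 h1
end
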